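/- arXiv:1406.7311 — 4 statements merged into one kernel-verified Lean document; each statement's English description precedes it below -/
import Mathlib

section
/- Weak Maximum Principle: Let Ω be a bounded open set in ℝ² and let u, v ∈ C²(Ω) ∩ C(closure Ω) be such that u ≤ v on ∂Ω and Lv(x) ≤ Lu(x) for all x ∈ Ω. Then u ≤ v on all of Ω. -/
/-!
Perturb `u - v` to `w = u - v + ε x₁²`. Since `L(x₁²) = 2 a₁₁ ≥ 2λ > 0`, we get `L w > 0` in `Ω`.
At an interior maximum the Hessian of `w` is negative semidefinite, while the coefficient matrix
of `L` is positive semidefinite by ellipticity, so `L w ≤ 0` there. Hence `w` attains its maximum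
over the compact set `closure Ω` on `frontier Ω`, where `w ≤ ε sup x₁²`; now let `ε → 0`.
-/

open MeasureTheory Real Set

noncomputable section

/-- First partial derivative in the `x₁` direction. -/
def d1 (u : ℝ × ℝ → ℝ) (x : ℝ × ℝ) : ℝ := fderiv ℝ u x (1, 0)

/-- First partial derivative in the `x₂` direction. -/
def d2 (u : ℝ × ℝ → ℝ) (x : ℝ × ℝ) : ℝ := fderiv ℝ u x (0, 1)

/-- The Grushin-type operator
`Lu = a₁₁ ∂₁₁ u + 2 a₁₂ x₁ ∂₁₂ u + a₂₂ x₁² ∂₂₂ u`. -/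
def Lop (a11 a12 a22 : ℝ × ℝ → ℝ) (u : ℝ × ℝ → ℝ) (x : ℝ × ℝ) : ℝ :=
  a11 x * d1 (d1 u) x + 2 * a12 x * x.1 * d2 (d1 u) x + a22 x * x.1 ^ 2 * d2 (d2 u) x

/-- Uniform ellipticity with constants `lam ≤ Lam`. -/
def IsElliptic (lam Lam : ℝ) (a11 a12 a22 : ℝ × ℝ → ℝ) : Prop :=
  ∀ x ξ : ℝ × ℝ,
    lam * (ξ.1 ^ 2 + ξ.2 ^ 2) ≤ a11 x * ξ.1 ^ 2 + 2 * a12 x * ξ.1 * ξ.2 + a22 x * ξ.2 ^ 2 ∧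
      a11 x * ξ.1 ^ 2 + 2 * a12 x * ξ.1 * ξ.2 + a22 x * ξ.2 ^ 2 ≤ Lam * (ξ.1 ^ 2 + ξ.2 ^ 2)

/-- The quasi distance `d̃`. -/
def qdist (x y : ℝ × ℝ) : ℝ :=
  |x.1 - y.1| + Real.sqrt (x.1 ^ 2 + y.1 ^ 2 + 4 * |x.2 - y.2|) - Real.sqrt (x.1 ^ 2 + y.1 ^ 2)

/-- Quasi metric ball for `d̃`. -/
def Bq (y : ℝ × ℝ) (r : ℝ) : Set (ℝ × ℝ) := {x | qdist x y < r}

/-- The boxes of Franchi–Lanconelli. -/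
def Box (y : ℝ × ℝ) (r : ℝ) : Set (ℝ × ℝ) :=
  {x | |x.1 - y.1| < r ∧ |x.2 - y.2| < r * (|y.1| + r)}

/-- The gauge `ρ(x,y) = ((x₁²−y₁²)² + 4(x₂−y₂)²)^{1/4}`. -/
def grho (x y : ℝ × ℝ) : ℝ :=
  ((x.1 ^ 2 - y.1 ^ 2) ^ 2 + 4 * (x.2 - y.2) ^ 2) ^ ((1 : ℝ) / 4)

/-- Sublevel set `G(y,r) = {x : g_r(x,y) < r}` of the gauge function `g_r`. -/
def Gset (y : ℝ × ℝ) (r : ℝ) : Set (ℝ × ℝ) :=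
  {x | (|y.1| < r ∧ grho x y < r) ∨
    (r ≤ |y.1| ∧ 0 ≤ x.1 * y.1 ∧ grho x y ^ 2 / |y.1| < r)}

/-- Sublevel set `G̃(y,r) = {x : g̃_r(x,y) < r}` of the gauge function `g̃_r`. -/
def Gtil (y : ℝ × ℝ) (r : ℝ) : Set (ℝ × ℝ) :=
  {x | (|y.1| < r ∧ grho x y < r) ∨ (r ≤ |y.1| ∧ grho x y ^ 2 / |y.1| < r)}

/-- Reflection with respect to the `x₂` axis. -/
def Sref (x : ℝ × ℝ) : ℝ × ℝ := (-x.1, x.2)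

/-- Symmetrized quasi metric ball `B̃(y,r) = B(y,r) ∪ B(S(y),r)`. -/
def Btil (y : ℝ × ℝ) (r : ℝ) : Set (ℝ × ℝ) := Bq y r ∪ Bq (Sref y) r

/-- The Euclidean diameter of a subset of `ℝ × ℝ`. -/
def euclDiam (s : Set (ℝ × ℝ)) : ℝ :=
  sSup {d | ∃ x ∈ s, ∃ y ∈ s, d = Real.sqrt ((x.1 - y.1) ^ 2 + (x.2 - y.2) ^ 2)}

/-- The Euclidean ball of center `z` and radius `r` in `ℝ × ℝ`. -/
def euclBall (z : ℝ × ℝ) (r : ℝ) : Set (ℝ × ℝ) :=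
  {x | Real.sqrt ((x.1 - z.1) ^ 2 + (x.2 - z.2) ^ 2) < r}

/-- The convex envelope of `w` on a set `E`: the sup of all affine functions
lying below `w` on `E`. -/
def convEnv (w : ℝ × ℝ → ℝ) (E : Set (ℝ × ℝ)) (x : ℝ × ℝ) : ℝ :=
  sSup {t | ∃ p : ℝ × ℝ, ∃ c : ℝ,
    (∀ z ∈ E, p.1 * z.1 + p.2 * z.2 + c ≤ w z) ∧ t = p.1 * x.1 + p.2 * x.2 + c}

open Filter Topology

theorem IsLocalMax.deriv_deriv_nonpos {g : ℝ → ℝ} {t : ℝ} (h : IsLocalMax g t)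
    (hc : ContinuousAt g t) : deriv (deriv g) t ≤ 0 := by
  by_contra! hpos
  -- by the second-derivative test `t` is also a local minimum, so `g` is locally constant
  have hconst : g =ᶠ[𝓝 t] fun _ => g t := by
    filter_upwards [h, isLocalMin_of_deriv_deriv_pos hpos h.deriv_eq_zero hc] with s hmax hmin
    exact le_antisymm hmax hmin
  have : deriv (deriv g) t = 0 := by
    rw [hconst.deriv.deriv_eq]
    simp
  exact hpos.ne' this

theorem IsLocalMax.iteratedFDeriv_two_self_nonpos {E : Type*} [NormedAddCommGroup E]
    [NormedSpace ℝ E] {w : E → ℝ} {x : E} (h : IsLocalMax w x) (hw : ContDiffAt ℝ 2 w x)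
    (e : E) : iteratedFDeriv ℝ 2 w x ![e, e] ≤ 0 := by
  set ℓ : ℝ → E := fun t => x + t • e
  have hℓ : ∀ t, HasDerivAt ℓ e t := fun t => by
    simpa [ℓ] using ((hasDerivAt_id t).smul_const e).const_add x
  have hℓ0 : ℓ 0 = x := by simp [ℓ]
  rw [← hℓ0] at h hw ⊢
  have hderiv : deriv (w ∘ ℓ) =ᶠ[𝓝 0] fun t => fderiv ℝ w (ℓ t) e := by
    filter_upwards [(hℓ 0).continuousAt.eventually ((hw.eventually (by simp)).mono
      fun y hy => hy.differentiableAt (by simp))] with t ht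
    exact (ht.hasFDerivAt.comp_hasDerivAt t (hℓ t)).deriv
  have hsecond : HasDerivAt (fun t => fderiv ℝ w (ℓ t) e) (fderiv ℝ (fderiv ℝ w) (ℓ 0) e e) 0 :=
    have hD := (hw.fderiv_right (m := 1) (by norm_num)).differentiableAt (by norm_num)
    (hD.hasFDerivAt.comp_hasDerivAt 0 (hℓ 0)).clm_apply (hasDerivAt_const 0 e) |>.congr_deriv
      (by simp)
  rw [iteratedFDeriv_two_apply]
  simpa [hderiv.deriv_eq, hsecond.deriv] using
    IsLocalMax.deriv_deriv_nonpos (h.comp_continuous (hℓ 0).continuousAt)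
      (hw.continuousAt.comp (hℓ 0).continuousAt)

theorem ContDiffAt.iteratedFDeriv_two_prod_self {w : ℝ × ℝ → ℝ} {x : ℝ × ℝ}
    (hw : ContDiffAt ℝ 2 w x) (s t : ℝ) :
    iteratedFDeriv ℝ 2 w x ![(s, t), (s, t)] =
      iteratedFDeriv ℝ 2 w x ![(1, 0), (1, 0)] * s ^ 2
        + 2 * iteratedFDeriv ℝ 2 w x ![(0, 1), (1, 0)] * s * t
        + iteratedFDeriv ℝ 2 w x ![(0, 1), (0, 1)] * t ^ 2 := by
  have hsymm := hw.isSymmSndFDerivAt (by simp) (1, 0) (0, 1)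
  have hst : ((s, t) : ℝ × ℝ) = s • (1, 0) + t • (0, 1) := by ext <;> simp
  simp only [iteratedFDeriv_two_apply, Matrix.cons_val_zero, Matrix.cons_val_one, hst, map_add,
    map_smul, add_apply, smul_apply, smul_eq_mul, hsymm]
  ring

theorem pairing_nonpos_of_posSemidef_of_negSemidef {a b c h₁₁ h₁₂ h₂₂ : ℝ} (ha : 0 < a)
    (hA : ∀ s t : ℝ, 0 ≤ a * s ^ 2 + 2 * b * s * t + c * t ^ 2)
    (hH : ∀ s t : ℝ, h₁₁ * s ^ 2 + 2 * h₁₂ * s * t + h₂₂ * t ^ 2 ≤ 0) :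
    a * h₁₁ + 2 * b * h₁₂ + c * h₂₂ ≤ 0 := by
  have hdet : 0 ≤ a * c - b ^ 2 := by
    have := hA b (-a)
    nlinarith
  have h₂₂_nonpos : h₂₂ ≤ 0 := by simpa using hH 0 1
  -- `a * (a h₁₁ + 2 b h₁₂ + c h₂₂) = H(a, b) + (a c - b²) h₂₂`
  have : a * (a * h₁₁ + 2 * b * h₁₂ + c * h₂₂) ≤ 0 := by
    nlinarith [hH a b, mul_nonpos_of_nonneg_of_nonpos hdet h₂₂_nonpos]
  exact nonpos_of_mul_nonpos_right (by linarith) ha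

theorem fderiv_fderiv_apply_eq_iteratedFDeriv {𝕜 E F : Type*} [NontriviallyNormedField 𝕜]
    [NormedAddCommGroup E] [NormedSpace 𝕜 E] [NormedAddCommGroup F] [NormedSpace 𝕜 F]
    {w : E → F} {x : E} (hw : DifferentiableAt 𝕜 (fderiv 𝕜 w) x) (a b : E) :
    fderiv 𝕜 (fun y => fderiv 𝕜 w y a) x b = iteratedFDeriv 𝕜 2 w x ![b, a] := by
  simp [fderiv_clm_apply hw (differentiableAt_const a), iteratedFDeriv_two_apply]

theorem Lop_eq_iteratedFDeriv (a11 a12 a22 : ℝ × ℝ → ℝ) {w : ℝ × ℝ → ℝ} {x : ℝ × ℝ}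
    (hw : ContDiffAt ℝ 2 w x) :
    Lop a11 a12 a22 w x =
      a11 x * iteratedFDeriv ℝ 2 w x ![(1, 0), (1, 0)]
        + 2 * (a12 x * x.1) * iteratedFDeriv ℝ 2 w x ![(0, 1), (1, 0)]
        + a22 x * x.1 ^ 2 * iteratedFDeriv ℝ 2 w x ![(0, 1), (0, 1)] := by
  have h := fderiv_fderiv_apply_eq_iteratedFDeriv
    ((hw.fderiv_right (m := 1) (by norm_num)).differentiableAt (by norm_num))
  rw [Lop, show d1 (d1 w) x = _ from h (1, 0) (1, 0), show d2 (d1 w) x = _ from h (1, 0) (0, 1),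
    show d2 (d2 w) x = _ from h (0, 1) (0, 1)]
  ring

theorem Lop_add (a11 a12 a22 : ℝ × ℝ → ℝ) {f g : ℝ × ℝ → ℝ} {x : ℝ × ℝ}
    (hf : ContDiffAt ℝ 2 f x) (hg : ContDiffAt ℝ 2 g x) :
    Lop a11 a12 a22 (f + g) x = Lop a11 a12 a22 f x + Lop a11 a12 a22 g x := by
  simp only [Lop_eq_iteratedFDeriv a11 a12 a22 (w := f + g) (hf.add hg),
    Lop_eq_iteratedFDeriv a11 a12 a22 hf, Lop_eq_iteratedFDeriv a11 a12 a22 hg,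
    iteratedFDeriv_add_apply hf hg, add_apply]
  ring

theorem Lop_sub (a11 a12 a22 : ℝ × ℝ → ℝ) {f g : ℝ × ℝ → ℝ} {x : ℝ × ℝ}
    (hf : ContDiffAt ℝ 2 f x) (hg : ContDiffAt ℝ 2 g x) :
    Lop a11 a12 a22 (f - g) x = Lop a11 a12 a22 f x - Lop a11 a12 a22 g x := by
  simp only [Lop_eq_iteratedFDeriv a11 a12 a22 (w := f - g) (hf.sub hg),
    Lop_eq_iteratedFDeriv a11 a12 a22 hf, Lop_eq_iteratedFDeriv a11 a12 a22 hg,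
    iteratedFDeriv_sub_apply hf hg, sub_apply]
  ring

theorem Lop_const_mul_fst_sq (a11 a12 a22 : ℝ × ℝ → ℝ) (c : ℝ) (x : ℝ × ℝ) :
    Lop a11 a12 a22 (fun y => c * y.1 ^ 2) x = 2 * c * a11 x := by
  have h1 : d1 (fun y : ℝ × ℝ => c * y.1 ^ 2) = fun y => 2 * c * y.1 := by
    ext y
    rw [d1, ((hasFDerivAt_fst.pow 2).const_mul c).fderiv]
    simp
    ring
  have h2 : d2 (fun y : ℝ × ℝ => c * y.1 ^ 2) = fun _ => 0 := by
    ext y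
    rw [d2, ((hasFDerivAt_fst.pow 2).const_mul c).fderiv]
    simp
  have h3 (y : ℝ × ℝ) : fderiv ℝ (fun y : ℝ × ℝ => 2 * c * y.1) y =
      (2 * c) • ContinuousLinearMap.fst ℝ ℝ ℝ :=
    (hasFDerivAt_fst.const_mul (2 * c)).fderiv
  simp [Lop, h1, h2, d1, d2, h3]
  ring

namespace IsElliptic

variable {lam Lam : ℝ} {a11 a12 a22 : ℝ × ℝ → ℝ}

theorem le_a11 (hell : IsElliptic lam Lam a11 a12 a22) (x : ℝ × ℝ) : lam ≤ a11 x := by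
  simpa using (hell x (1, 0)).1

theorem Lop_nonpos_of_isLocalMax (hell : IsElliptic lam Lam a11 a12 a22) (hlam : 0 < lam)
    {w : ℝ × ℝ → ℝ} {x : ℝ × ℝ} (hmax : IsLocalMax w x) (hw : ContDiffAt ℝ 2 w x) :
    Lop a11 a12 a22 w x ≤ 0 := by
  -- the coefficient form of `L` at `x` is the ellipticity form evaluated at `(s, x₁ t)`
  have hA (s t : ℝ) : 0 ≤ a11 x * s ^ 2 + 2 * (a12 x * x.1) * s * t + a22 x * x.1 ^ 2 * t ^ 2 := by
    have := (hell x (s, x.1 * t)).1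
    have : 0 ≤ lam * (s ^ 2 + (x.1 * t) ^ 2) := by positivity
    nlinarith
  have hH (s t : ℝ) : iteratedFDeriv ℝ 2 w x ![(1, 0), (1, 0)] * s ^ 2
      + 2 * iteratedFDeriv ℝ 2 w x ![(0, 1), (1, 0)] * s * t
      + iteratedFDeriv ℝ 2 w x ![(0, 1), (0, 1)] * t ^ 2 ≤ 0 :=
    hw.iteratedFDeriv_two_prod_self s t ▸ IsLocalMax.iteratedFDeriv_two_self_nonpos hmax hw (s, t)
  rw [Lop_eq_iteratedFDeriv a11 a12 a22 hw]
  exact pairing_nonpos_of_posSemidef_of_negSemidef (hlam.trans_le (hell.le_a11 x)) hA hH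

theorem not_isLocalMax_sub_add_const_mul_fst_sq (hell : IsElliptic lam Lam a11 a12 a22)
    (hlam : 0 < lam) {u v : ℝ × ℝ → ℝ} {x : ℝ × ℝ} (hu : ContDiffAt ℝ 2 u x)
    (hv : ContDiffAt ℝ 2 v x) (hL : Lop a11 a12 a22 v x ≤ Lop a11 a12 a22 u x) {ε : ℝ}
    (hε : 0 < ε) : ¬ IsLocalMax (u - v + fun y => ε * y.1 ^ 2) x := fun hmax => by
  have hφ : ContDiffAt ℝ 2 (fun y : ℝ × ℝ => ε * y.1 ^ 2) x := by fun_prop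
  have hLw := hell.Lop_nonpos_of_isLocalMax hlam hmax ((hu.sub hv).add hφ)
  rw [Lop_add _ _ _ (f := u - v) (hu.sub hv) hφ, Lop_sub _ _ _ hu hv,
    Lop_const_mul_fst_sq] at hLw
  nlinarith [hlam.trans_le (hell.le_a11 x)]

end IsElliptic

theorem IsCompact.exists_isMaxOn_frontier_of_not_isLocalMax {X : Type*} [TopologicalSpace X]
    {Ω : Set X} {w : X → ℝ} (hΩ : IsCompact (closure Ω)) (hΩo : IsOpen Ω) (hne : Ω.Nonempty)
    (hw : ContinuousOn w (closure Ω)) (hno : ∀ x ∈ Ω, ¬ IsLocalMax w x) :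
    ∃ x₀ ∈ frontier Ω, IsMaxOn w (closure Ω) x₀ := by
  obtain ⟨x₀, hx₀, hmax⟩ := hΩ.exists_isMaxOn hne.closure hw
  refine ⟨x₀, ⟨hx₀, fun hint => ?_⟩, hmax⟩
  rw [hΩo.interior_eq] at hint
  exact hno x₀ hint (hmax.isLocalMax (mem_of_superset (hΩo.mem_nhds hint) subset_closure))

theorem weak_maximum_principle_general (lam Lam : ℝ) (hlam : 0 < lam)
    (a11 a12 a22 : ℝ × ℝ → ℝ) (hell : IsElliptic lam Lam a11 a12 a22)
    (Ω : Set (ℝ × ℝ)) (hΩopen : IsOpen Ω) (hΩbd : Bornology.IsBounded Ω)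
    (u v : ℝ × ℝ → ℝ)
    (hu2 : ContDiffOn ℝ 2 u Ω) (huc : ContinuousOn u (closure Ω))
    (hv2 : ContDiffOn ℝ 2 v Ω) (hvc : ContinuousOn v (closure Ω))
    (hbd : ∀ x ∈ frontier Ω, u x ≤ v x)
    (hL : ∀ x ∈ Ω, Lop a11 a12 a22 v x ≤ Lop a11 a12 a22 u x) :
    ∀ x ∈ Ω, u x ≤ v x := by
  intro x hx
  have hK : IsCompact (closure Ω) := hΩbd.isCompact_closure
  obtain ⟨M, hM⟩ := hK.bddAbove_image (f := fun y => y.1 ^ 2) (by fun_prop)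
  have hM0 : 0 ≤ M := (sq_nonneg x.1).trans (hM ⟨x, subset_closure hx, rfl⟩)
  refine le_of_forall_pos_le_add fun δ hδ => ?_
  set ε := δ / (M + 1)
  have hε : 0 < ε := by positivity
  obtain ⟨x₀, hx₀, hmax⟩ := hK.exists_isMaxOn_frontier_of_not_isLocalMax hΩopen ⟨x, hx⟩
    ((huc.sub hvc).add (by fun_prop)) fun y hy =>
      hell.not_isLocalMax_sub_add_const_mul_fst_sq hlam (hu2.contDiffAt (hΩopen.mem_nhds hy))
        (hv2.contDiffAt (hΩopen.mem_nhds hy)) (hL y hy) hε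
  have hwx := hmax (subset_closure hx)
  have hx₀M := hM ⟨x₀, frontier_subset_closure hx₀, rfl⟩
  simp only [Pi.add_apply, Pi.sub_apply, mem_ofPred_eq] at hwx hx₀M
  have hεM : ε * M ≤ δ := by
    rw [div_mul_eq_mul_div, div_le_iff₀ (by positivity)]
    linarith
  nlinarith [hbd x₀ hx₀, mul_le_mul_of_nonneg_left hx₀M hε.le, mul_nonneg hε.le (sq_nonneg x.1)]

/-- **Weak Maximum Principle** for the Grushin-type operator `L`. -/
theorem weak_maximum_principle (lam Lam : ℝ) (hlam : 0 < lam) (hLam : lam ≤ Lam)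
    (a11 a12 a22 : ℝ × ℝ → ℝ) (hell : IsElliptic lam Lam a11 a12 a22)
    (Ω : Set (ℝ × ℝ)) (hΩopen : IsOpen Ω) (hΩbd : Bornology.IsBounded Ω)
    (u v : ℝ × ℝ → ℝ)
    (hu2 : ContDiffOn ℝ 2 u Ω) (huc : ContinuousOn u (closure Ω))
    (hv2 : ContDiffOn ℝ 2 v Ω) (hvc : ContinuousOn v (closure Ω))
    (hbd : ∀ x ∈ frontier Ω, u x ≤ v x)
    (hL : ∀ x ∈ Ω, Lop a11 a12 a22 v x ≤ Lop a11 a12 a22 u x) :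
    ∀ x ∈ Ω, u x ≤ v x :=
  weak_maximum_principle_general lam Lam hlam a11 a12 a22 hell Ω hΩopen hΩbd u v hu2 huc hv2 hvc hbd
    hL
end
end

section
/- Ring Condition: There exists a universal constant c > 0 such that for every y ∈ ℝ², every r > 0 and every ε ∈ (0,1), the Lebesgue measure of the ring B(y,r) \ B(y,(1−ε)r) satisfies |B(y,r) \ B(y,(1−ε)r)| ≤ c · ε · |B(y,r)|. (In particular, with ω(ε) = cε one has |B(y,r) \ B(y,(1−ε)r)| ≤ ω(ε)|B(y,r)| and ω(ε) = O(ε) as ε → 0⁺.) -/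
open MeasureTheory Real Set

noncomputable section

/-!
Vertical sections of `B(y, ρ)` are intervals centred at `y₂`, of half-length
`h_ρ(x₁) = (u² + 2uσ)/4` with `u = (ρ - |x₁ - y₁|)⁺` and `σ = √(x₁² + y₁²)`: solve
`d̃(x, y) < ρ` for `|x₂ - y₂|`. For `0 ≤ s ≤ r` one has `h_r - h_s ≤ (r - s)(r + |y₁|)`, and the
sections vanish unless `|x₁ - y₁| < r`, so by Fubini the ring `B(y, r) \ B(y, (1 - ε)r)` has
measure at most `4εr²(r + |y₁|)`. On the other hand `B(y, r)` contains the box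
`|x₁ - y₁| < r/2`, `|x₂ - y₂| < h`, with `h ≥ r²/16 + r|y₁|/4`, whose measure is at least
`r²(r + |y₁|)/8`.
-/

theorem MeasureTheory.Measure.prod_le_mul_of_sections_le {α β : Type*} [MeasurableSpace α]
    [MeasurableSpace β] (μ : Measure α) (ν : Measure β) [SFinite ν] {E : Set (α × β)}
    (hE : MeasurableSet E) {I : Set α} (hI : MeasurableSet I) (hEI : ∀ p ∈ E, p.1 ∈ I)
    {c : ENNReal} (hc : ∀ x ∈ I, ν (Prod.mk x ⁻¹' E) ≤ c) :
    μ.prod ν E ≤ c * μ I := by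
  have hsection : ∀ x, ν (Prod.mk x ⁻¹' E) ≤ I.indicator (fun _ ↦ c) x := by
    intro x
    by_cases hx : x ∈ I
    · simpa [hx] using hc x hx
    · have : Prod.mk x ⁻¹' E = ∅ := eq_empty_of_forall_notMem fun z hz ↦ hx (hEI _ hz)
      simp [this]
  calc μ.prod ν E = ∫⁻ x, ν (Prod.mk x ⁻¹' E) ∂μ := Measure.prod_apply hE
    _ ≤ ∫⁻ x, I.indicator (fun _ ↦ c) x ∂μ := lintegral_mono hsection
    _ = c * μ I := lintegral_indicator_const hI c

lemma measurableSet_Bq (y : ℝ × ℝ) (ρ : ℝ) : MeasurableSet (Bq y ρ) := by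
  have : Continuous fun x ↦ qdist x y := by unfold qdist; fun_prop
  exact (isOpen_lt this continuous_const).measurableSet

lemma abs_fst_sub_le_qdist (x y : ℝ × ℝ) : |x.1 - y.1| ≤ qdist x y := by
  have : √(x.1 ^ 2 + y.1 ^ 2) ≤ √(x.1 ^ 2 + y.1 ^ 2 + 4 * |x.2 - y.2|) :=
    Real.sqrt_le_sqrt (le_add_of_nonneg_right (by positivity))
  unfold qdist
  linarith

/-- Half-length of the section `{x₂ | (x₁, x₂) ∈ B((y₁, y₂), ρ)}`, an interval centred at `y₂`
(see `mem_Bq_iff`). -/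
def sectionRadius (x1 y1 ρ : ℝ) : ℝ :=
  (max (ρ - |x1 - y1|) 0 ^ 2 + 2 * max (ρ - |x1 - y1|) 0 * √(x1 ^ 2 + y1 ^ 2)) / 4

lemma mem_Bq_iff (x1 x2 y1 y2 ρ : ℝ) :
    (x1, x2) ∈ Bq (y1, y2) ρ ↔ |x2 - y2| < sectionRadius x1 y1 ρ := by
  unfold sectionRadius
  set σ := √(x1 ^ 2 + y1 ^ 2)
  rcases lt_or_ge |x1 - y1| ρ with ht | ht
  · rw [max_eq_left (by linarith)]
    have hσsq : σ ^ 2 = x1 ^ 2 + y1 ^ 2 := Real.sq_sqrt (by positivity)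
    have hqdist : (x1, x2) ∈ Bq (y1, y2) ρ ↔
        √(x1 ^ 2 + y1 ^ 2 + 4 * |x2 - y2|) < ρ - |x1 - y1| + σ := by
      change |x1 - y1| + _ - σ < ρ ↔ _
      constructor <;> intro h <;> linarith
    rw [hqdist, Real.sqrt_lt' (by positivity), add_sq, hσsq]
    constructor <;> intro h <;> linarith
  · rw [max_eq_right (by linarith)]
    refine iff_of_false (fun h ↦ ?_) (by norm_num)
    exact (ht.trans (abs_fst_sub_le_qdist (x1, x2) (y1, y2))).not_gt h

lemma sectionRadius_nonneg (x1 y1 ρ : ℝ) : 0 ≤ sectionRadius x1 y1 ρ := by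
  unfold sectionRadius
  have := le_max_right (ρ - |x1 - y1|) 0
  positivity

lemma sectionRadius_mono (x1 y1 : ℝ) : Monotone (sectionRadius x1 y1) := fun s r hsr ↦ by
  unfold sectionRadius
  gcongr

lemma sqrt_sq_add_sq_le (x1 y1 : ℝ) : √(x1 ^ 2 + y1 ^ 2) ≤ |x1 - y1| + 2 * |y1| := by
  have hx1 : |x1| ≤ |x1 - y1| + |y1| := by simpa using abs_add_le (x1 - y1) y1
  rw [Real.sqrt_le_iff]
  refine ⟨by positivity, ?_⟩
  nlinarith [sq_abs x1, sq_abs y1, abs_nonneg x1, abs_nonneg y1, abs_nonneg (x1 - y1)]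

lemma sectionRadius_sub_le (x1 y1 : ℝ) {r s : ℝ} (hs : 0 ≤ s) (hsr : s ≤ r) :
    sectionRadius x1 y1 r - sectionRadius x1 y1 s ≤ (r - s) * (r + |y1|) := by
  unfold sectionRadius
  rcases le_or_gt r |x1 - y1| with ht | ht
  · rw [max_eq_right (by linarith), max_eq_right (by linarith), sub_self]
    exact mul_nonneg (by linarith) (by linarith [abs_nonneg y1])
  · rw [max_eq_left (a := r - _) (by linarith)]
    set us := max (s - |x1 - y1|) 0
    have hus : s - |x1 - y1| ≤ us := le_max_left _ _
    have hus0 : 0 ≤ us := le_max_right _ _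
    have hus_le : us ≤ r - |x1 - y1| := max_le (by linarith) (by linarith)
    have hsq : (r - |x1 - y1| - us) * (r - |x1 - y1| + us) ≤ (r - s) * (2 * r) :=
      mul_le_mul (by linarith) (by linarith [abs_nonneg (x1 - y1)]) (by linarith) (by linarith)
    have hlin : (r - |x1 - y1| - us) * √(x1 ^ 2 + y1 ^ 2) ≤ (r - s) * (r + 2 * |y1|) :=
      mul_le_mul (by linarith) (by linarith [sqrt_sq_add_sq_le x1 y1]) (Real.sqrt_nonneg _)
        (by linarith)
    linear_combination (hsq + 2 * hlin) / 4

lemma le_sectionRadius (x1 y1 : ℝ) {ρ δ : ℝ} (hδ : 0 ≤ δ) (ht : |x1 - y1| ≤ ρ - δ) :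
    (δ ^ 2 + 2 * δ * |y1|) / 4 ≤ sectionRadius x1 y1 ρ := by
  have hu : δ ≤ max (ρ - |x1 - y1|) 0 := le_max_of_le_left (by linarith)
  have hσ : |y1| ≤ √(x1 ^ 2 + y1 ^ 2) := Real.abs_le_sqrt (by nlinarith)
  unfold sectionRadius
  gcongr

lemma Real.volume_ball_diff_ball (a : ℝ) {r s : ℝ} (hs : 0 ≤ s) (hsr : s ≤ r) :
    volume (Metric.ball a r \ Metric.ball a s) = ENNReal.ofReal (2 * (r - s)) := by
  rw [measure_sdiff (Metric.ball_subset_ball hsr) measurableSet_ball.nullMeasurableSet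
    measure_ball_lt_top.ne, Real.volume_ball, Real.volume_ball,
    ← ENNReal.ofReal_sub _ (by positivity)]
  ring_nf

lemma volume_Bq_diff_Bq_le (y : ℝ × ℝ) {r s : ℝ} (hs : 0 ≤ s) (hsr : s ≤ r) :
    volume (Bq y r \ Bq y s) ≤ ENNReal.ofReal (4 * (r - s) * r * (r + |y.1|)) := by
  obtain ⟨y1, y2⟩ := y
  have hsection : ∀ x1, Prod.mk x1 ⁻¹' (Bq (y1, y2) r \ Bq (y1, y2) s) =
      Metric.ball y2 (sectionRadius x1 y1 r) \ Metric.ball y2 (sectionRadius x1 y1 s) := by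
    intro x1
    ext x2
    simp [mem_Bq_iff, Real.dist_eq]
  have hsupport : ∀ p ∈ Bq (y1, y2) r \ Bq (y1, y2) s, p.1 ∈ Metric.ball y1 r := fun p hp ↦
    (abs_fst_sub_le_qdist p (y1, y2)).trans_lt hp.1
  calc volume (Bq (y1, y2) r \ Bq (y1, y2) s)
      ≤ ENNReal.ofReal (2 * ((r - s) * (r + |y1|))) * volume (Metric.ball y1 r) := by
        rw [Measure.volume_eq_prod]
        refine Measure.prod_le_mul_of_sections_le _ _
          ((measurableSet_Bq _ _).diff (measurableSet_Bq _ _)) measurableSet_ball hsupport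
          fun x1 _ ↦ ?_
        rw [hsection, Real.volume_ball_diff_ball _ (sectionRadius_nonneg _ _ _)]
        · gcongr
          exact sectionRadius_sub_le x1 y1 hs hsr
        · exact sectionRadius_mono x1 y1 hsr
    _ = ENNReal.ofReal (4 * (r - s) * r * (r + |y1|)) := by
        rw [Real.volume_ball, ← ENNReal.ofReal_mul (by nlinarith [abs_nonneg y1])]
        ring_nf

lemma ofReal_le_volume_Bq (y : ℝ × ℝ) {r : ℝ} (hr : 0 ≤ r) :
    ENNReal.ofReal (r ^ 2 * (r + |y.1|) / 8) ≤ volume (Bq y r) := by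
  obtain ⟨y1, y2⟩ := y
  set a := ((r / 2) ^ 2 + 2 * (r / 2) * |y1|) / 4 with ha
  have hbox : Metric.ball y1 (r / 2) ×ˢ Metric.ball y2 a ⊆ Bq (y1, y2) r := by
    rintro ⟨x1, x2⟩ ⟨hx1, hx2⟩
    have hx1' : |x1 - y1| < r / 2 := by simpa [Real.dist_eq] using hx1
    have hx2' : |x2 - y2| < a := by simpa [Real.dist_eq] using hx2
    rw [mem_Bq_iff]
    exact hx2'.trans_le (le_sectionRadius x1 y1 (δ := r / 2) (by positivity) (by linarith))
  calc ENNReal.ofReal (r ^ 2 * (r + |y1|) / 8) ≤ ENNReal.ofReal (2 * (r / 2) * (2 * a)) := by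
        gcongr
        rw [ha]
        nlinarith [mul_nonneg (sq_nonneg r) (abs_nonneg y1)]
    _ = volume (Metric.ball y1 (r / 2) ×ˢ Metric.ball y2 a) := by
        rw [Measure.volume_eq_prod, Measure.prod_prod, Real.volume_ball, Real.volume_ball,
          ← ENNReal.ofReal_mul (by positivity)]
    _ ≤ volume (Bq (y1, y2) r) := measure_mono hbox

/-- **Ring Condition** for the quasi metric balls `B(y,r)`. -/
theorem ring_condition :
    ∃ c > (0 : ℝ), ∀ y : ℝ × ℝ, ∀ r > (0 : ℝ), ∀ ε : ℝ, 0 < ε → ε < 1 →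
      volume (Bq y r \ Bq y ((1 - ε) * r)) ≤ ENNReal.ofReal (c * ε) * volume (Bq y r) := by
  refine ⟨32, by norm_num, fun y r hr ε hε0 hε1 ↦ ?_⟩
  calc volume (Bq y r \ Bq y ((1 - ε) * r))
      ≤ ENNReal.ofReal (4 * (r - (1 - ε) * r) * r * (r + |y.1|)) :=
        volume_Bq_diff_Bq_le y (by nlinarith) (by nlinarith)
    _ = ENNReal.ofReal (32 * ε) * ENNReal.ofReal (r ^ 2 * (r + |y.1|) / 8) := by
        rw [← ENNReal.ofReal_mul (by positivity)]
        ring_nf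
    _ ≤ ENNReal.ofReal (32 * ε) * volume (Bq y r) := by
        gcongr
        exact ofReal_le_volume_Bq y hr.le
end
end

section
/- Second Structure Theorem: There exists a constant C > 0 such that for every y ∈ ℝ² and every r > 0 one has Box(y, C⁻¹ r) ⊂ G(y, r) ⊂ Box(y, C r). (In fact one can take the explicit inclusions Box(y, r/5) ⊂ G(y, r) ⊂ Box(y, 3r).) -/
open MeasureTheory Real Set

noncomputable section

/-! With `a = x₁ - y₁` and `M = max |y₁| r` one has `ρ⁴ = a² (x₁ + y₁)² + 4 (x₂ - y₂)²`, and both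
branches of `g_r(x, y) < r` say `ρ⁴ < (r M)²` (plus `x₁ y₁ ≥ 0` when `|y₁| ≥ r`).
On `Box(y, r/5)` we have `|x₁ + y₁| < 11M/5` and `|x₂ - y₂| < 6rM/25`, so `ρ⁴ < (265/625) (r M)²`.
Conversely `ρ⁴ < (r M)²` gives `|x₂ - y₂| < rM/2` at once; for `a`, either `|y₁| ≥ r`, where the sign
condition yields `|x₁ + y₁| ≥ |y₁|` and hence `|a| < r`, or `|y₁| < r`, where `x₁² < 2r²`. -/

lemma grho_nonneg (x y : ℝ × ℝ) : 0 ≤ grho x y := by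
  unfold grho; positivity

lemma grho_pow_four (x y : ℝ × ℝ) :
    grho x y ^ 4 = (x.1 ^ 2 - y.1 ^ 2) ^ 2 + 4 * (x.2 - y.2) ^ 2 := by
  rw [grho, ← Real.rpow_natCast, ← Real.rpow_mul (by positivity)]
  norm_num

lemma mem_Gset_iff {x y : ℝ × ℝ} {r : ℝ} (hr : 0 < r) :
    x ∈ Gset y r ↔
      (x.1 ^ 2 - y.1 ^ 2) ^ 2 + 4 * (x.2 - y.2) ^ 2 < (r * max |y.1| r) ^ 2 ∧
        (r ≤ |y.1| → 0 ≤ x.1 * y.1) := by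
  rw [← grho_pow_four]
  have hρ := grho_nonneg x y
  rcases lt_or_ge |y.1| r with hy | hy
  · have hpow : grho x y ^ 4 < (r * r) ^ 2 ↔ grho x y < r := by
      rw [show (r * r) ^ 2 = r ^ 4 by ring]
      exact pow_lt_pow_iff_left₀ hρ hr.le (by norm_num)
    simp [Gset, hy, hy.not_ge, max_eq_right hy.le, hpow]
  · have hm : 0 < |y.1| := hr.trans_le hy
    have hpow : grho x y ^ 4 < (r * |y.1|) ^ 2 ↔ grho x y ^ 2 / |y.1| < r := by
      rw [div_lt_iff₀ hm, show grho x y ^ 4 = (grho x y ^ 2) ^ 2 by ring]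
      exact sq_lt_sq₀ (by positivity) (by positivity)
    simp [Gset, hy, hy.not_gt, hpow, and_comm]

lemma Box_mono (y : ℝ × ℝ) {s t : ℝ} (hs : 0 ≤ s) (hst : s ≤ t) : Box y s ⊆ Box y t := by
  rintro x ⟨h1, h2⟩
  exact ⟨h1.trans_le hst, h2.trans_le (by have := hs.trans hst; gcongr)⟩

lemma mul_pos_of_abs_sub_lt_abs {a b : ℝ} (h : |a - b| < |b|) : 0 < a * b := by
  have hab : -(|a - b| * |b|) ≤ (a - b) * b := by
    rw [← abs_mul]; exact neg_abs_le _
  have : |a - b| * |b| < |b| * |b| := mul_lt_mul_of_pos_right h ((abs_nonneg _).trans_lt h)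
  nlinarith [abs_mul_abs_self b]

lemma Box_div_five_subset_Gset (y : ℝ × ℝ) {r : ℝ} (hr : 0 < r) : Box y (r / 5) ⊆ Gset y r := by
  rintro x ⟨ha, hb⟩
  rw [mem_Gset_iff hr]
  set M := max |y.1| r
  have hyM : |y.1| ≤ M := le_max_left _ _
  have hrM : r ≤ M := le_max_right _ _
  refine ⟨?_, fun hy => (mul_pos_of_abs_sub_lt_abs (ha.trans_le (by linarith))).le⟩
  have hsum : |x.1 + y.1| < 11 / 5 * M :=
    calc |x.1 + y.1| = |(x.1 - y.1) + 2 * y.1| := by ring_nf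
      _ ≤ |x.1 - y.1| + 2 * |y.1| := by
          grw [abs_add_le, abs_mul, abs_two]
      _ < 11 / 5 * M := by linarith
  have hdiff : |x.1 ^ 2 - y.1 ^ 2| < 11 / 25 * (r * M) := by
    rw [show x.1 ^ 2 - y.1 ^ 2 = (x.1 - y.1) * (x.1 + y.1) by ring, abs_mul]
    calc |x.1 - y.1| * |x.1 + y.1| < r / 5 * (11 / 5 * M) :=
          mul_lt_mul'' ha hsum (abs_nonneg _) (abs_nonneg _)
      _ = 11 / 25 * (r * M) := by ring
  have hvert : |x.2 - y.2| < 6 / 25 * (r * M) :=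
    hb.trans_le (by nlinarith)
  have hrM0 : 0 < r * M := mul_pos hr (hr.trans_le hrM)
  rw [← sq_abs (x.1 ^ 2 - y.1 ^ 2), ← sq_abs (x.2 - y.2)]
  nlinarith [abs_nonneg (x.1 ^ 2 - y.1 ^ 2), abs_nonneg (x.2 - y.2)]

lemma Gset_subset_Box_three_mul (y : ℝ × ℝ) {r : ℝ} (hr : 0 < r) : Gset y r ⊆ Box y (3 * r) := by
  intro x hx
  rw [mem_Gset_iff hr] at hx
  obtain ⟨hQ, hsign⟩ := hx
  set M := max |y.1| r
  have hrM0 : 0 < r * M := mul_pos hr (hr.trans_le (le_max_right _ _))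
  have hvert : |x.2 - y.2| < r * M / 2 :=
    abs_lt_of_sq_lt_sq (by nlinarith [sq_nonneg (x.1 ^ 2 - y.1 ^ 2)]) (by positivity)
  have hdiff : |x.1 ^ 2 - y.1 ^ 2| < r * M :=
    abs_lt_of_sq_lt_sq (by nlinarith [sq_nonneg (x.2 - y.2)]) hrM0.le
  refine ⟨?_, hvert.trans_le ?_⟩
  · rcases le_or_gt r |y.1| with hy | hy
    · have hM : M = |y.1| := max_eq_left hy
      have hsum : |y.1| ≤ |x.1 + y.1| := sq_le_sq.1 (by nlinarith [hsign hy, sq_nonneg x.1])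
      have : |x.1 - y.1| * |y.1| < r * |y.1| :=
        calc |x.1 - y.1| * |y.1| ≤ |x.1 - y.1| * |x.1 + y.1| := by gcongr
          _ = |x.1 ^ 2 - y.1 ^ 2| := by rw [← abs_mul]; ring_nf
          _ < r * |y.1| := hM ▸ hdiff
      linarith [lt_of_mul_lt_mul_right this (abs_nonneg _)]
    · have hM : M = r := max_eq_right hy.le
      rw [hM] at hdiff
      apply abs_lt_of_sq_lt_sq _ (by positivity)
      nlinarith [abs_lt.1 hdiff, sq_abs y.1, abs_nonneg y.1, sq_nonneg (x.1 + y.1)]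
  · nlinarith [max_le_iff.2 ⟨le_add_of_nonneg_right hr.le, le_add_of_nonneg_left (abs_nonneg y.1)⟩]

/-- **Second Structure Theorem**: the sublevel sets `G(y,r)` are comparable to
the boxes `Box(y,r)`; in fact `Box(y,r/5) ⊆ G(y,r) ⊆ Box(y,3r)`. -/
theorem second_structure_theorem :
    (∃ C > (0 : ℝ), ∀ y : ℝ × ℝ, ∀ r > (0 : ℝ),
      Box y (C⁻¹ * r) ⊆ Gset y r ∧ Gset y r ⊆ Box y (C * r)) ∧
    (∀ y : ℝ × ℝ, ∀ r > (0 : ℝ),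
      Box y (r / 5) ⊆ Gset y r ∧ Gset y r ⊆ Box y (3 * r)) := by
  have explicit (y : ℝ × ℝ) (r : ℝ) (hr : 0 < r) :
      Box y (r / 5) ⊆ Gset y r ∧ Gset y r ⊆ Box y (3 * r) :=
    ⟨Box_div_five_subset_Gset y hr, Gset_subset_Box_three_mul y hr⟩
  refine ⟨⟨5, by norm_num, fun y r hr => ?_⟩, explicit⟩
  rw [show (5 : ℝ)⁻¹ * r = r / 5 by ring]
  exact ⟨(explicit y r hr).1, (explicit y r hr).2.trans (Box_mono y (by linarith) (by linarith))⟩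
end
end

section
/- Barrier lemma: Let y = (y1, 0) ∈ ℝ² be fixed, let α ≤ 2 − 3Λ/λ, and define φ(x) = ρ(x,y)^α on the open set {x ∈ ℝ² : ρ(x,y) > 0}. Then φ is twice continuously differentiable on {ρ(·,y) > 0} and Lφ(x) ≥ 0 for every x with ρ(x,y) > 0, for every choice of coefficients a11, a12, a22 satisfying the uniform ellipticity condition with constants λ, Λ. -/
open MeasureTheory Real Set

noncomputable section

/-! Write `W = ρ(·,y)⁴ = u² + v²` with `u = x₁² - y₁²`, `v = 2x₂`, and `Q` for the coefficient
form at `x`. Since `∂₁W = 4x₁u` and `x₁∂₂W = 4x₁v`, the chain rule gives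
`L(W^{α/4}) = α W^{α/4-2} ((α-4) x₁² Q(u,v) + W (a₁₁ u + 2 (a₁₁ + a₂₂) x₁²))`.
The identity `Q(u,v) + Q(v,-u) = (a₁₁ + a₂₂) W`, ellipticity and `u ≤ x₁²` bound the bracket by
`x₁² W ((α - 2) λ + 3Λ) ≤ 0`, and `α < 0`. -/

section RpowSecondDeriv

variable {E : Type*} [NormedAddCommGroup E] [NormedSpace ℝ E] {f : E → ℝ} {x : E} {q : ℝ}

theorem fderiv_rpow_const_apply (hf : DifferentiableAt ℝ f x) (hx : f x ≠ 0) (v : E) :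
    fderiv ℝ (fun z => f z ^ q) x v = q * f x ^ (q - 1) * fderiv ℝ f x v := by
  rw [(hf.hasFDerivAt.rpow_const (Or.inl hx)).fderiv, smul_apply, smul_eq_mul]

theorem fderiv_fderiv_rpow_const_apply (hf : ContDiffAt ℝ 2 f x) (hx : f x ≠ 0) (v w : E) :
    fderiv ℝ (fun z => fderiv ℝ (fun y => f y ^ q) z v) x w =
      q * (f x ^ (q - 1) * fderiv ℝ (fun z => fderiv ℝ f z v) x w +
        (q - 1) * f x ^ (q - 2) * fderiv ℝ f x v * fderiv ℝ f x w) := by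
  have h_near : (fun z => fderiv ℝ (fun y => f y ^ q) z v) =ᶠ[nhds x]
      fun z => q * f z ^ (q - 1) * fderiv ℝ f z v := by
    filter_upwards [hf.eventually (by simp), hf.continuousAt.eventually_ne hx] with z hz hzx
    exact fderiv_rpow_const_apply (hz.differentiableAt two_ne_zero) hzx v
  have hdf : DifferentiableAt ℝ (fun z => fderiv ℝ f z v) x :=
    ((hf.fderiv_right (m := 1) le_rfl).differentiableAt one_ne_zero).clm_apply
      (differentiableAt_const v)
  have hpow : HasFDerivAt (fun z => q * f z ^ (q - 1))
      (q • ((q - 1) * f x ^ (q - 1 - 1)) • fderiv ℝ f x) x :=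
    ((hf.differentiableAt two_ne_zero).hasFDerivAt.rpow_const (Or.inl hx)).const_mul q
  rw [h_near.fderiv_eq,
    (hpow.mul hdf.hasFDerivAt).fderiv (f := fun z => q * f z ^ (q - 1) * fderiv ℝ f z v)]
  simp only [add_apply, smul_apply, smul_eq_mul, show q - 1 - 1 = q - 2 by ring]
  ring

end RpowSecondDeriv

theorem Lop_rpow_const {a11 a12 a22 f : ℝ × ℝ → ℝ} {x : ℝ × ℝ} (hf : ContDiffAt ℝ 2 f x)
    (hx : f x ≠ 0) (q : ℝ) :
    Lop a11 a12 a22 (fun z => f z ^ q) x =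
      q * f x ^ (q - 2) * ((q - 1) * (a11 x * d1 f x ^ 2 +
        2 * a12 x * d1 f x * (x.1 * d2 f x) + a22 x * (x.1 * d2 f x) ^ 2) +
        f x * Lop a11 a12 a22 f x) := by
  unfold Lop d1 d2
  simp only [fderiv_fderiv_rpow_const_apply hf hx]
  rw [show q - 1 = q - 2 + 1 by ring, rpow_add_one hx]
  ring

theorem d1_comp_fst {g : ℝ → ℝ} {g' : ℝ} {x : ℝ × ℝ} (hg : HasDerivAt g g' x.1) :
    d1 (fun z => g z.1) x = g' := by
  have h : HasFDerivAt (fun z : ℝ × ℝ => g z.1) (g' • ContinuousLinearMap.fst ℝ ℝ ℝ) x :=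
    hg.comp_hasFDerivAt x hasFDerivAt_fst
  simp [d1, h.fderiv]

theorem d2_comp_fst {g : ℝ → ℝ} {g' : ℝ} {x : ℝ × ℝ} (hg : HasDerivAt g g' x.1) :
    d2 (fun z => g z.1) x = 0 := by
  have h : HasFDerivAt (fun z : ℝ × ℝ => g z.1) (g' • ContinuousLinearMap.fst ℝ ℝ ℝ) x :=
    hg.comp_hasFDerivAt x hasFDerivAt_fst
  simp [d2, h.fderiv]

theorem d2_comp_snd {g : ℝ → ℝ} {g' : ℝ} {x : ℝ × ℝ} (hg : HasDerivAt g g' x.2) :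
    d2 (fun z => g z.2) x = g' := by
  have h : HasFDerivAt (fun z : ℝ × ℝ => g z.2) (g' • ContinuousLinearMap.snd ℝ ℝ ℝ) x :=
    hg.comp_hasFDerivAt x hasFDerivAt_snd
  simp [d2, h.fderiv]

def grho4 (y1 : ℝ) (x : ℝ × ℝ) : ℝ := (x.1 ^ 2 - y1 ^ 2) ^ 2 + 4 * x.2 ^ 2

theorem grho_eq_grho4_rpow (y1 : ℝ) (x : ℝ × ℝ) :
    grho x (y1, 0) = grho4 y1 x ^ ((1 : ℝ) / 4) := by
  simp [grho, grho4]

theorem grho4_nonneg (y1 : ℝ) (x : ℝ × ℝ) : 0 ≤ grho4 y1 x := by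
  unfold grho4; positivity

theorem grho_pos_iff (y1 : ℝ) (x : ℝ × ℝ) : 0 < grho x (y1, 0) ↔ 0 < grho4 y1 x := by
  have h := grho4_nonneg y1 x
  rw [grho_eq_grho4_rpow, h.lt_iff_ne', (rpow_nonneg h _).lt_iff_ne',
    ne_eq, rpow_eq_zero h (by norm_num)]

theorem contDiff_grho4 (y1 : ℝ) : ContDiff ℝ 2 (grho4 y1) := by
  unfold grho4; fun_prop

theorem hasFDerivAt_grho4 (y1 : ℝ) (x : ℝ × ℝ) :
    HasFDerivAt (grho4 y1) ((4 * (x.1 ^ 2 - y1 ^ 2) * x.1) • ContinuousLinearMap.fst ℝ ℝ ℝ +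
      (8 * x.2) • ContinuousLinearMap.snd ℝ ℝ ℝ) x := by
  have h := (((hasFDerivAt_fst (𝕜 := ℝ) (p := x)).pow 2).sub_const (y1 ^ 2)).pow 2 |>.add
    (((hasFDerivAt_snd (𝕜 := ℝ) (p := x)).pow 2).const_mul 4)
  refine h.congr_fderiv (ContinuousLinearMap.ext fun v => ?_)
  simp
  ring

theorem d1_grho4 (y1 : ℝ) : d1 (grho4 y1) = fun z => 4 * (z.1 ^ 2 - y1 ^ 2) * z.1 := by
  ext z; simp [d1, (hasFDerivAt_grho4 y1 z).fderiv]

theorem d2_grho4 (y1 : ℝ) : d2 (grho4 y1) = fun z => 8 * z.2 := by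
  ext z; simp [d2, (hasFDerivAt_grho4 y1 z).fderiv]

theorem Lop_grho4 (a11 a12 a22 : ℝ × ℝ → ℝ) (y1 : ℝ) (x : ℝ × ℝ) :
    Lop a11 a12 a22 (grho4 y1) x =
      4 * (a11 x * (x.1 ^ 2 - y1 ^ 2) + 2 * (a11 x + a22 x) * x.1 ^ 2) := by
  have hcubic :
      HasDerivAt (fun t => 4 * (t ^ 2 - y1 ^ 2) * t) (4 * (3 * x.1 ^ 2 - y1 ^ 2)) x.1 :=
    ((((hasDerivAt_pow 2 x.1).sub_const (y1 ^ 2)).const_mul 4).mul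
      (hasDerivAt_id' x.1)).congr_deriv (by push_cast; ring)
  have h11 := d1_comp_fst hcubic
  have h21 := d2_comp_fst hcubic
  have h22 : d2 (fun z => 8 * z.2) x = 8 * 1 :=
    d2_comp_snd ((hasDerivAt_id' x.2).const_mul 8)
  simp only [Lop, d1_grho4, d2_grho4, h11, h21, h22]
  ring

theorem barrier_bracket_nonneg {lam Lam A B C α u v s : ℝ} (hlam : 0 < lam)
    (hα : α ≤ 2 - 3 * Lam / lam)
    (hQ : ∀ ξ : ℝ × ℝ,
      lam * (ξ.1 ^ 2 + ξ.2 ^ 2) ≤ A * ξ.1 ^ 2 + 2 * B * ξ.1 * ξ.2 + C * ξ.2 ^ 2 ∧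
        A * ξ.1 ^ 2 + 2 * B * ξ.1 * ξ.2 + C * ξ.2 ^ 2 ≤ Lam * (ξ.1 ^ 2 + ξ.2 ^ 2))
    (hs : 0 ≤ s) (hus : u ≤ s) :
    0 ≤ α * ((α - 4) * s * (A * u ^ 2 + 2 * B * u * v + C * v ^ 2) +
      (u ^ 2 + v ^ 2) * (A * u + 2 * (A + C) * s)) := by
  obtain ⟨hA_lower, hA_upper⟩ : lam ≤ A ∧ A ≤ Lam := by simpa using hQ (1, 0)
  have hαlam : (α - 2) * lam + 3 * Lam ≤ 0 := by
    have := mul_le_mul_of_nonneg_right hα hlam.le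
    rw [sub_mul, div_mul_cancel₀ _ hlam.ne'] at this
    linarith
  have hα_neg : α ≤ -1 := by nlinarith
  have hW : 0 ≤ u ^ 2 + v ^ 2 := by positivity
  have hAu : A * u ≤ Lam * s := by
    rcases le_total u 0 with hu | hu
    · nlinarith
    · nlinarith
  have hbracket : (α - 4) * s * (A * u ^ 2 + 2 * B * u * v + C * v ^ 2) +
      (u ^ 2 + v ^ 2) * (A * u + 2 * (A + C) * s) ≤ 0 := by
    linarith [mul_le_mul_of_nonpos_left (hQ (u, v)).1 (by nlinarith : (α - 2) * s ≤ 0),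
      mul_le_mul_of_nonneg_left (hQ (v, -u)).2 (by positivity : 0 ≤ 2 * s),
      mul_le_mul_of_nonneg_left hAu hW,
      mul_nonpos_of_nonpos_of_nonneg hαlam (mul_nonneg hs hW)]
  exact mul_nonneg_of_nonpos_of_nonpos (by linarith) hbracket

theorem Lop_grho4_rpow (a11 a12 a22 : ℝ × ℝ → ℝ) (y1 α : ℝ) {x : ℝ × ℝ}
    (hx : grho4 y1 x ≠ 0) :
    Lop a11 a12 a22 (fun z => grho4 y1 z ^ (α / 4)) x = grho4 y1 x ^ (α / 4 - 2) *
      (α * ((α - 4) * x.1 ^ 2 * (a11 x * (x.1 ^ 2 - y1 ^ 2) ^ 2 +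
        2 * a12 x * (x.1 ^ 2 - y1 ^ 2) * (2 * x.2) + a22 x * (2 * x.2) ^ 2) +
        ((x.1 ^ 2 - y1 ^ 2) ^ 2 + (2 * x.2) ^ 2) *
          (a11 x * (x.1 ^ 2 - y1 ^ 2) + 2 * (a11 x + a22 x) * x.1 ^ 2))) := by
  rw [Lop_rpow_const (contDiff_grho4 y1).contDiffAt hx, d1_grho4, d2_grho4, Lop_grho4]
  rw [show grho4 y1 x = (x.1 ^ 2 - y1 ^ 2) ^ 2 + (2 * x.2) ^ 2 by unfold grho4; ring]
  ring

theorem barrier_lemma_general (lam Lam : ℝ) (hlam : 0 < lam)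
    (y1 : ℝ) (α : ℝ) (hα : α ≤ 2 - 3 * Lam / lam) :
    ContDiffOn ℝ 2 (fun x : ℝ × ℝ => grho x (y1, 0) ^ α)
      {x : ℝ × ℝ | 0 < grho x (y1, 0)} ∧
    ∀ a11 a12 a22 : ℝ × ℝ → ℝ, IsElliptic lam Lam a11 a12 a22 →
      ∀ x : ℝ × ℝ, 0 < grho x (y1, 0) →
        0 ≤ Lop a11 a12 a22 (fun x : ℝ × ℝ => grho x (y1, 0) ^ α) x := by
  have hφ : (fun x : ℝ × ℝ => grho x (y1, 0) ^ α) = fun x => grho4 y1 x ^ (α / 4) := by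
    ext x
    rw [grho_eq_grho4_rpow, ← rpow_mul (grho4_nonneg y1 x)]
    ring_nf
  refine ⟨fun x hx => ?_, fun a11 a12 a22 hell x hx => ?_⟩
  · rw [hφ]
    exact ((contDiff_grho4 y1).contDiffAt.rpow_const_of_ne
      ((grho_pos_iff y1 x).1 hx).ne').contDiffWithinAt
  · have hx4 := (grho_pos_iff y1 x).1 hx
    rw [hφ, Lop_grho4_rpow a11 a12 a22 y1 α hx4.ne']
    exact mul_nonneg (rpow_pos_of_pos hx4 _).le <|
      barrier_bracket_nonneg hlam hα (hell x) (sq_nonneg x.1) (by linarith [sq_nonneg y1])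

/-- **Barrier lemma**: for `y = (y₁,0)` and `α ≤ 2 − 3Λ/λ`, the function
`φ = ρ(·,y)^α` is `C²` and satisfies `Lφ ≥ 0` on `{ρ(·,y) > 0}`. -/
theorem barrier_lemma (lam Lam : ℝ) (hlam : 0 < lam) (hLam : lam ≤ Lam)
    (y1 : ℝ) (α : ℝ) (hα : α ≤ 2 - 3 * Lam / lam) :
    ContDiffOn ℝ 2 (fun x : ℝ × ℝ => grho x (y1, 0) ^ α)
      {x : ℝ × ℝ | 0 < grho x (y1, 0)} ∧
    ∀ a11 a12 a22 : ℝ × ℝ → ℝ, IsElliptic lam Lam a11 a12 a22 →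
      ∀ x : ℝ × ℝ, 0 < grho x (y1, 0) →
        0 ≤ Lop a11 a12 a22 (fun x : ℝ × ℝ => grho x (y1, 0) ^ α) x :=
  barrier_lemma_general lam Lam hlam y1 α hα
end
end
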